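/- arXiv:2111.00876 — 2 statements merged into one kernel-verified Lean document; each statement's English description precedes it below -/
import Mathlib

section
/- In any finite CMP where some state s1 is unreachable from the start state s0 under every policy, for every Markov reward function, any two deterministic policies that agree on all reachable states have equal start-state value. Consequently, a SOAP that contains one such policy but excludes another agreeing on all reachable states is not realizable by any Markov reward function. -/
open scoped BigOperators

/-- Probability of being in state `s` at time `t`, starting from `s0` and following
the deterministic policy `π` under transition kernel `T`. -/
def visit {S A : Type} [Fintype S] [DecidableEq S]
    (T : S → A → S → ℝ) (π : S → A) (s0 : S) : ℕ → S → ℝ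
  | 0, s => if s = s0 then 1 else 0
  | t + 1, s' => ∑ s, visit T π s0 t s * T s (π s) s'

/-- Value from state `s0`: V^π(s0) = Σ_t γ^t E[R(s_t, a_t)]. -/
noncomputable def value {S A : Type} [Fintype S] [DecidableEq S]
    (T : S → A → S → ℝ) (γ : ℝ) (R : S → A → ℝ) (π : S → A) (s0 : S) : ℝ :=
  ∑' t : ℕ, γ ^ t * ∑ s, visit T π s0 t s * R s (π s)


lemma visit_nonneg {S A : Type} [Fintype S] [DecidableEq S]
    (T : S → A → S → ℝ) (hT : ∀ s a s', 0 ≤ T s a s') (π : S → A) (s0 : S) :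
    ∀ t s, 0 ≤ visit T π s0 t s := by
  intro t
  induction t with
  | zero => intro s; simp [visit]; split <;> norm_num
  | succ t ih =>
      intro s'
      exact Finset.sum_nonneg fun s _ => mul_nonneg (ih s) (hT s (π s) s')

lemma visit_agree {S A : Type} [Fintype S] [DecidableEq S]
    (T : S → A → S → ℝ) (hT : ∀ s a s', 0 ≤ T s a s') (s0 : S) (π π' : S → A)
    (h : ∀ s : S, (∃ (σ : S → A) (t : ℕ), 0 < visit T σ s0 t s) → π s = π' s) :
    ∀ t s, visit T π s0 t s = visit T π' s0 t s := by
  intro t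
  induction t with
  | zero => intro s; rfl
  | succ t ih =>
      intro s'
      show (∑ s, visit T π s0 t s * T s (π s) s') = ∑ s, visit T π' s0 t s * T s (π' s) s'
      refine Finset.sum_congr rfl fun s _ => ?_
      rcases eq_or_lt_of_le (visit_nonneg T hT π s0 t s) with h0 | hpos
      · rw [ih s]; rw [ih s] at h0; simp [← h0]
      · rw [ih, h s ⟨π, t, hpos⟩]

/-- In a finite CMP where state `s1` is unreachable from `s0` under every policy:
(1) any two deterministic policies agreeing on all reachable states (states visited
with positive probability under some policy) have equal start-state value, for every
Markov reward function; and (2) consequently, no Markov reward function realizes a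
SOAP containing one such policy but excluding another that agrees on all reachable
states. -/
theorem unreachable_state_soap_inexpressible {S A : Type} [Fintype S] [DecidableEq S]
    (T : S → A → S → ℝ)
    (hT : (∀ s a s', 0 ≤ T s a s') ∧ ∀ s a, ∑ s', T s a s' = 1)
    (γ : ℝ) (hγ0 : 0 < γ) (hγ1 : γ < 1) (s0 s1 : S)
    (hunreach : ∀ (π : S → A) (t : ℕ), visit T π s0 t s1 = 0) :
    (∀ (R : S → A → ℝ) (π π' : S → A),
      (∀ s : S, (∃ (σ : S → A) (t : ℕ), 0 < visit T σ s0 t s) → π s = π' s) →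
      value T γ R π s0 = value T γ R π' s0) ∧
    (∀ (R : S → A → ℝ) (Pg : Set (S → A)) (π π' : S → A),
      π ∈ Pg → π' ∉ Pg →
      (∀ s : S, (∃ (σ : S → A) (t : ℕ), 0 < visit T σ s0 t s) → π s = π' s) →
      ¬ (∀ πg ∈ Pg, ∀ πb ∉ Pg, value T γ R πb s0 < value T γ R πg s0)) := by
  have key : ∀ (R : S → A → ℝ) (π π' : S → A),
      (∀ s : S, (∃ (σ : S → A) (t : ℕ), 0 < visit T σ s0 t s) → π s = π' s) →
      value T γ R π s0 = value T γ R π' s0 := by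
    intro R π π' h
    unfold value
    refine tsum_congr fun t => ?_
    congr 1
    refine Finset.sum_congr rfl fun s _ => ?_
    rcases eq_or_lt_of_le (visit_nonneg T hT.1 π s0 t s) with h0 | hpos
    · rw [visit_agree T hT.1 s0 π π' h] at h0 ⊢
      simp [← h0]
    · rw [visit_agree T hT.1 s0 π π' h, h s ⟨π, t, hpos⟩]
  refine ⟨key, fun R Pg π π' hπ hπ' h hreal => ?_⟩
  have := hreal π hπ π' hπ'
  rw [key R π π' h] at this
  exact lt_irrefl _ this
end

section
/- Task realization is not closed under sets of CMPs: there exist two CMPs E_X and E_Y with the same state set {s0, s1, s2}, action set {a1, a2}, start state s0, and discount γ, and a SOAP Π_G, such that some state-based reward function R : S → ℝ realizes Π_G (range criterion) in E_X, some reward function realizes Π_G in E_Y, but no single reward function realizes Π_G in both E_X and E_Y simultaneously. -/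
open scoped BigOperators

/-- Value with state-based rewards, reward-on-entry convention:
V^π(s0) = Σ_{t≥1} γ^{t-1} E[R(s_t)]. -/
noncomputable def svalue {S A : Type} [Fintype S] [DecidableEq S]
    (T : S → A → S → ℝ) (γ : ℝ) (R : S → ℝ) (π : S → A) (s0 : S) : ℝ :=
  ∑' t : ℕ, γ ^ t * ∑ s, visit T π s0 (t + 1) s * R s

/-- States: `Fin 3` (s0 = 0 start, s1 = 1, s2 = 2). Actions: `Bool`
(`false = a1`, `true = a2`). In E_X, from s0 both actions go to s1 or s2 with
probability 1/2 each; in s1 and s2, a1 self-loops and a2 swaps s1 ↔ s2. -/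
noncomputable def TX : Fin 3 → Bool → Fin 3 → ℝ := fun s a s' =>
  if s = 0 then (if s' = 1 then 1/2 else if s' = 2 then 1/2 else 0)
  else if a = false then (if s' = s then 1 else 0)
  else if s = 1 then (if s' = 2 then 1 else 0)
  else (if s' = 1 then 1 else 0)

/-- E_Y: same as E_X but the action effects in s1, s2 are inverted
(a2 self-loops, a1 swaps). -/
noncomputable def TY : Fin 3 → Bool → Fin 3 → ℝ := fun s a s' =>
  if s = 0 then (if s' = 1 then 1/2 else if s' = 2 then 1/2 else 0)
  else if a = true then (if s' = s then 1 else 0)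
  else if s = 1 then (if s' = 2 then 1 else 0)
  else (if s' = 1 then 1 else 0)

/-- The SOAP Π_G = {π_{112}, π_{212}}: policies taking a1 in s1 and a2 in s2. -/
def PiG : Set (Fin 3 → Bool) := {π | π 1 = false ∧ π 2 = true}

/-- `R` realizes `PiG` (range criterion) in the CMP with transitions `T`,
discount 0.95 and start state s0 = 0. -/
noncomputable def Realizes (T : Fin 3 → Bool → Fin 3 → ℝ) (R : Fin 3 → ℝ) : Prop :=
  ∀ πg ∈ PiG, ∀ πb ∉ PiG,
    svalue T ((19 : ℝ)/20) R πb 0 < svalue T ((19 : ℝ)/20) R πg 0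

/- ### Auxiliary lemmas -/


lemma tsum_aux (c : ℕ → ℝ) (A B : ℝ) (hc0 : c 0 = A) (hc : ∀ t, c (t+1) = B) :
    ∑' t : ℕ, ((19:ℝ)/20)^t * c t = A + 19 * B := by
  have hg : Summable (fun t : ℕ => ((19:ℝ)/20)^t) :=
    summable_geometric_of_lt_one (by norm_num) (by norm_num)
  have hs1 : Summable (fun t : ℕ => ((19:ℝ)/20)^(t+1) * c (t+1)) := by
    have := hg.mul_right (((19:ℝ)/20) * B)
    refine this.congr fun t => ?_
    simp [hc, pow_succ]; ring
  have hs : Summable (fun t : ℕ => ((19:ℝ)/20)^t * c t) :=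
    (summable_nat_add_iff 1).mp hs1
  rw [Summable.tsum_eq_zero_add hs]
  have : ∑' t : ℕ, ((19:ℝ)/20)^(t+1) * c (t+1)
      = ∑' t : ℕ, ((19:ℝ)/20)^t * (((19:ℝ)/20) * B) := by
    refine tsum_congr fun t => ?_; simp [hc, pow_succ]; ring
  rw [this, tsum_mul_right, tsum_geometric_of_lt_one (by norm_num) (by norm_num), hc0]
  ring

lemma visit_succ {S A : Type} [Fintype S] [DecidableEq S]
    (T : S → A → S → ℝ) (π : S → A) (s0 : S) (t : ℕ) (s' : S) :
    visit T π s0 (t+1) s' = ∑ s, visit T π s0 t s * T s (π s) s' := rfl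

lemma visit1 (π : Fin 3 → Bool) :
    visit TX π 0 1 0 = 0 ∧ visit TX π 0 1 1 = 1/2 ∧ visit TX π 0 1 2 = 1/2 := by
  refine ⟨?_, ?_, ?_⟩ <;> simp [visit, Fin.sum_univ_three, TX]

lemma TYX (s : Fin 3) (a : Bool) (s' : Fin 3) : TY s a s' = TX s (!a) s' := by
  fin_cases s <;> cases a <;> simp [TX, TY]

lemma visit_flip (π : Fin 3 → Bool) (t : ℕ) (s : Fin 3) :
    visit TY π 0 t s = visit TX (fun u => !(π u)) 0 t s := by
  induction t generalizing s with
  | zero => simp [visit]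
  | succ n ih =>
    simp only [visit]
    exact Finset.sum_congr rfl fun u _ => by rw [ih, TYX]

lemma visitX_FT (π : Fin 3 → Bool) (h1 : π 1 = false) (h2 : π 2 = true) :
    ∀ t, visit TX π 0 (t+2) 0 = 0 ∧ visit TX π 0 (t+2) 1 = 1 ∧ visit TX π 0 (t+2) 2 = 0 := by
  intro t
  induction t with
  | zero =>
    obtain ⟨v0, v1, v2⟩ := visit1 π
    refine ⟨?_, ?_, ?_⟩ <;>
      · rw [show (0+2 : ℕ) = 1 + 1 from rfl, visit_succ, Fin.sum_univ_three, v0, v1, v2]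
        simp [TX, h1, h2] <;> norm_num
  | succ n ih =>
    obtain ⟨v0, v1, v2⟩ := ih
    refine ⟨?_, ?_, ?_⟩ <;>
      · rw [show (n+1+2 : ℕ) = (n+2) + 1 from rfl, visit_succ, Fin.sum_univ_three, v0, v1, v2]
        simp [TX, h1, h2] <;> norm_num

lemma visitX_TF (π : Fin 3 → Bool) (h1 : π 1 = true) (h2 : π 2 = false) :
    ∀ t, visit TX π 0 (t+2) 0 = 0 ∧ visit TX π 0 (t+2) 1 = 0 ∧ visit TX π 0 (t+2) 2 = 1 := by
  intro t
  induction t with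
  | zero =>
    obtain ⟨v0, v1, v2⟩ := visit1 π
    refine ⟨?_, ?_, ?_⟩ <;>
      · rw [show (0+2 : ℕ) = 1 + 1 from rfl, visit_succ, Fin.sum_univ_three, v0, v1, v2]
        simp [TX, h1, h2] <;> norm_num
  | succ n ih =>
    obtain ⟨v0, v1, v2⟩ := ih
    refine ⟨?_, ?_, ?_⟩ <;>
      · rw [show (n+1+2 : ℕ) = (n+2) + 1 from rfl, visit_succ, Fin.sum_univ_three, v0, v1, v2]
        simp [TX, h1, h2] <;> norm_num

lemma visitX_same (π : Fin 3 → Bool) (h : π 1 = π 2) :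
    ∀ t, visit TX π 0 (t+1) 0 = 0 ∧ visit TX π 0 (t+1) 1 = 1/2 ∧
      visit TX π 0 (t+1) 2 = 1/2 := by
  intro t
  induction t with
  | zero => exact visit1 π
  | succ n ih =>
    obtain ⟨v0, v1, v2⟩ := ih
    cases h2 : π 2 with
    | false =>
      have h1 : π 1 = false := h.trans h2
      refine ⟨?_, ?_, ?_⟩ <;>
        · rw [show (n+1+1 : ℕ) = (n+1) + 1 from rfl, visit_succ, Fin.sum_univ_three, v0, v1, v2]
          simp [TX, h1, h2] <;> norm_num
    | true =>
      have h1 : π 1 = true := h.trans h2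
      refine ⟨?_, ?_, ?_⟩ <;>
        · rw [show (n+1+1 : ℕ) = (n+1) + 1 from rfl, visit_succ, Fin.sum_univ_three, v0, v1, v2]
          simp [TX, h1, h2] <;> norm_num

lemma sval_FT (π : Fin 3 → Bool) (R : Fin 3 → ℝ) (h1 : π 1 = false) (h2 : π 2 = true) :
    svalue TX ((19:ℝ)/20) R π 0 = (R 1 + R 2)/2 + 19 * R 1 := by
  unfold svalue
  refine tsum_aux _ _ _ ?_ ?_
  · obtain ⟨v0, v1, v2⟩ := visit1 π
    simp only [Fin.sum_univ_three, zero_add, v0, v1, v2]; ring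
  · intro t
    obtain ⟨v0, v1, v2⟩ := visitX_FT π h1 h2 t
    have e : t + 1 + 1 = t + 2 := rfl
    simp only [Fin.sum_univ_three, e, v0, v1, v2]; ring

lemma sval_TF (π : Fin 3 → Bool) (R : Fin 3 → ℝ) (h1 : π 1 = true) (h2 : π 2 = false) :
    svalue TX ((19:ℝ)/20) R π 0 = (R 1 + R 2)/2 + 19 * R 2 := by
  unfold svalue
  refine tsum_aux _ _ _ ?_ ?_
  · obtain ⟨v0, v1, v2⟩ := visit1 π
    simp only [Fin.sum_univ_three, zero_add, v0, v1, v2]; ring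
  · intro t
    obtain ⟨v0, v1, v2⟩ := visitX_TF π h1 h2 t
    have e : t + 1 + 1 = t + 2 := rfl
    simp only [Fin.sum_univ_three, e, v0, v1, v2]; ring

lemma sval_same (π : Fin 3 → Bool) (R : Fin 3 → ℝ) (h : π 1 = π 2) :
    svalue TX ((19:ℝ)/20) R π 0 = (R 1 + R 2)/2 + 19 * ((R 1 + R 2)/2) := by
  unfold svalue
  refine tsum_aux _ _ _ ?_ ?_
  · obtain ⟨v0, v1, v2⟩ := visitX_same π h 0
    simp only [Fin.sum_univ_three, zero_add, v0, v1, v2]; ring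
  · intro t
    obtain ⟨v0, v1, v2⟩ := visitX_same π h (t+1)
    simp only [Fin.sum_univ_three, v0, v1, v2]; ring

lemma sval_Y (π : Fin 3 → Bool) (R : Fin 3 → ℝ) :
    svalue TY ((19:ℝ)/20) R π 0 = svalue TX ((19:ℝ)/20) R (fun u => !(π u)) 0 := by
  unfold svalue
  refine tsum_congr fun t => ?_
  congr 1
  exact Finset.sum_congr rfl fun s _ => by rw [visit_flip]

/-- Task realization is not closed under sets of CMPs: the SOAP `PiG` is realizable by
some state-based reward function in E_X and by some reward function in E_Y, but no
single reward function realizes it in both simultaneously. -/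
theorem realization_not_closed_under_cmp_sets :
    (∃ R : Fin 3 → ℝ, Realizes TX R) ∧
    (∃ R : Fin 3 → ℝ, Realizes TY R) ∧
    ¬ ∃ R : Fin 3 → ℝ, Realizes TX R ∧ Realizes TY R := by
  refine ⟨⟨fun s => if s = 1 then 1 else 0, ?_⟩,
          ⟨fun s => if s = 2 then 1 else 0, ?_⟩, ?_⟩
  · intro πg hg πb hb
    obtain ⟨hg1, hg2⟩ := hg
    rw [sval_FT πg _ hg1 hg2]
    cases hb1 : πb 1 <;> cases hb2 : πb 2
    · rw [sval_same πb _ (hb1.trans hb2.symm)]; simp <;> norm_num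
    · exact absurd ⟨hb1, hb2⟩ hb
    · rw [sval_TF πb _ hb1 hb2]; simp <;> norm_num
    · rw [sval_same πb _ (hb1.trans hb2.symm)]; simp <;> norm_num
  · intro πg hg πb hb
    obtain ⟨hg1, hg2⟩ := hg
    rw [sval_Y πg, sval_Y πb,
        sval_TF (fun u => !(πg u)) _ (by simp [hg1]) (by simp [hg2])]
    cases hb1 : πb 1 <;> cases hb2 : πb 2
    · rw [sval_same (fun u => !(πb u)) _ (by simp [hb1, hb2])]; simp <;> norm_num
    · exact absurd ⟨hb1, hb2⟩ hb
    · rw [sval_FT (fun u => !(πb u)) _ (by simp [hb1]) (by simp [hb2])]; simp <;> norm_num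
    · rw [sval_same (fun u => !(πb u)) _ (by simp [hb1, hb2])]; simp <;> norm_num
  · rintro ⟨R, hX, hY⟩
    have hgmem : (fun s : Fin 3 => decide (s = 2)) ∈ PiG := ⟨by simp, by simp⟩
    have hbmem : (fun s : Fin 3 => decide (s = 1)) ∉ PiG := by
      rintro ⟨h1, -⟩
      simp at h1
    have hx := hX _ hgmem _ hbmem
    have hy := hY _ hgmem _ hbmem
    rw [sval_FT (fun s => decide (s = 2)) R (by simp) (by simp),
        sval_TF (fun s => decide (s = 1)) R (by simp) (by simp)] at hx
    rw [sval_Y, sval_Y,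
        sval_TF (fun u => !(decide (u = 2))) R (by simp) (by simp),
        sval_FT (fun u => !(decide (u = 1))) R (by simp) (by simp)] at hy
    linarith
end
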